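/- With S_N the span of products of N tridiagonal Toeplitz matrices in R^{d×d}: if n + m ≥ d + 3, then E_{n,m} ∈ S_{d-1}. -/

import Mathlib

/-- `E_{n,m}` (1-based positions): 1 in position `(n, m)`, zeros elsewhere. -/
def matUnit (d : ℕ) (n m : ℤ) : Matrix (Fin d) (Fin d) ℝ :=
  Matrix.of fun i j => if (i : ℤ) + 1 = n ∧ (j : ℤ) + 1 = m then 1 else 0

/-- `To_d(1)`: tridiagonal Toeplitz matrices, `x_{ij} = w_{j-i}` for `|i-j| ≤ 1`, else `0`. -/
def Tod1 (d : ℕ) : Set (Matrix (Fin d) (Fin d) ℝ) :=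
  {A | ∃ w : ℤ → ℝ, ∀ i j : Fin d,
    A i j = if |(i : ℤ) - (j : ℤ)| ≤ 1 then w ((j : ℤ) - (i : ℤ)) else 0}

/-- `S_N`: finite sums of (ordered) products of `N` tridiagonal Toeplitz matrices. -/
def SN (d N : ℕ) : Set (Matrix (Fin d) (Fin d) ℝ) :=
  {A | ∃ n : ℕ, ∃ T : Fin n → Fin N → Matrix (Fin d) (Fin d) ℝ,
    (∀ i j, T i j ∈ Tod1 d) ∧ A = ∑ i, (List.ofFn (T i)).prod}

/-! With `J` the shift with ones on the superdiagonal and `L = Jᵀ`, the 0/1 matrix `J^a L^b`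
is the `(a - b)`-th diagonal restricted to the rows `1, …, d - a`, so
`J^a L^b - J^(a+1) L^(b+1) = E_{d-a, d-b}`. For `a = d - n`, `b = d - m` both products have at
most `2d - n - m + 2 ≤ d - 1` factors; padding with identity matrices puts them in `S_{d-1}`, and
the sign is absorbed into a factor `-J`. -/

open Matrix

section Tod1

variable {d : ℕ}

lemma one_mem_Tod1 : (1 : Matrix (Fin d) (Fin d) ℝ) ∈ Tod1 d := by
  refine ⟨fun z => if z = 0 then 1 else 0, fun i j => ?_⟩
  simp only [one_apply, Fin.ext_iff, abs_le]
  split_ifs <;> first | rfl | omega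

lemma neg_mem_Tod1 {A : Matrix (Fin d) (Fin d) ℝ} (hA : A ∈ Tod1 d) : -A ∈ Tod1 d := by
  obtain ⟨w, hw⟩ := hA
  refine ⟨-w, fun i j => ?_⟩
  rw [neg_apply, hw]
  split_ifs <;> simp

lemma transpose_mem_Tod1 {A : Matrix (Fin d) (Fin d) ℝ} (hA : A ∈ Tod1 d) : Aᵀ ∈ Tod1 d := by
  obtain ⟨w, hw⟩ := hA
  refine ⟨fun z => w (-z), fun i j => ?_⟩
  rw [transpose_apply, hw, abs_sub_comm]
  simp only [neg_sub]

end Tod1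

def upShift (d : ℕ) : Matrix (Fin d) (Fin d) ℝ :=
  of fun i j => if (j : ℕ) = i + 1 then 1 else 0

lemma upShift_mem_Tod1 (d : ℕ) : upShift d ∈ Tod1 d := by
  refine ⟨fun z => if z = 1 then 1 else 0, fun i j => ?_⟩
  simp only [upShift, of_apply, abs_le]
  split_ifs <;> first | rfl | omega

lemma sum_fin_ite_val_eq {M : Type*} [AddCommMonoid M] {d : ℕ} (c : ℕ) (f : Fin d → M) :
    ∑ k : Fin d, (if (k : ℕ) = c then f k else 0) = if h : c < d then f ⟨c, h⟩ else 0 := by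
  split_ifs with h
  · rw [Finset.sum_eq_single ⟨c, h⟩ (fun k _ hk => if_neg fun hkc => hk (Fin.ext hkc))
      (fun h' => absurd (Finset.mem_univ _) h'), if_pos rfl]
  · exact Finset.sum_eq_zero fun k _ => if_neg fun (hkc : (k : ℕ) = c) => h (hkc ▸ k.isLt)

lemma upShift_pow_apply (d a : ℕ) (i j : Fin d) :
    (upShift d ^ a) i j = if (j : ℕ) = i + a then 1 else 0 := by
  induction a generalizing j with
  | zero => simp [one_apply, Fin.ext_iff, eq_comm]
  | succ a ih =>
    simp only [pow_succ, mul_apply, ih]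
    simp only [upShift, of_apply, ite_mul, one_mul, zero_mul, sum_fin_ite_val_eq]
    have := j.isLt
    split_ifs <;> first | rfl | omega

lemma upShift_pow_mul_transpose_pow_apply (d a b : ℕ) (i j : Fin d) :
    (upShift d ^ a * (upShift d ^ b)ᵀ) i j =
      if (i : ℕ) + a = j + b ∧ (i : ℕ) + a < d then 1 else 0 := by
  simp only [mul_apply, transpose_apply, upShift_pow_apply, ite_mul, one_mul, zero_mul,
    sum_fin_ite_val_eq]
  split_ifs <;> first | rfl | omega

lemma upShift_pow_mul_transpose_pow_sub_succ (d a b : ℕ) :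
    upShift d ^ a * (upShift d ^ b)ᵀ - upShift d ^ (a + 1) * (upShift d ^ (b + 1))ᵀ =
      matUnit d ((d : ℤ) - a) ((d : ℤ) - b) := by
  ext i j
  rw [Matrix.sub_apply, upShift_pow_mul_transpose_pow_apply, upShift_pow_mul_transpose_pow_apply]
  simp only [matUnit, of_apply]
  split_ifs <;> first | omega | norm_num

section SN

variable {d : ℕ}

lemma one_mem_SN_zero : (1 : Matrix (Fin d) (Fin d) ℝ) ∈ SN d 0 :=
  ⟨1, fun _ => Fin.elim0, fun _ k => k.elim0, by simp⟩

lemma mul_mem_SN_succ {A X : Matrix (Fin d) (Fin d) ℝ} {N : ℕ} (hA : A ∈ Tod1 d)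
    (hX : X ∈ SN d N) : A * X ∈ SN d (N + 1) := by
  obtain ⟨n, T, hT, rfl⟩ := hX
  refine ⟨n, fun i => Fin.cons A (T i), fun i => Fin.cases hA (hT i), ?_⟩
  simp [List.ofFn_succ, Finset.mul_sum]

lemma pow_mul_mem_SN {A X : Matrix (Fin d) (Fin d) ℝ} {N : ℕ} (hA : A ∈ Tod1 d)
    (hX : X ∈ SN d N) (a : ℕ) : A ^ a * X ∈ SN d (N + a) := by
  induction a with
  | zero => simpa using hX
  | succ a ih => simpa [pow_succ', mul_assoc, add_assoc] using mul_mem_SN_succ hA ih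

lemma SN_mono {N M : ℕ} (h : N ≤ M) : SN d N ⊆ SN d M := by
  induction M, h using Nat.le_induction with
  | base => exact le_rfl
  | succ M _ ih => exact fun X hX => by simpa using mul_mem_SN_succ one_mem_Tod1 (ih hX)

lemma add_mem_SN {X Y : Matrix (Fin d) (Fin d) ℝ} {N : ℕ} (hX : X ∈ SN d N)
    (hY : Y ∈ SN d N) : X + Y ∈ SN d N := by
  obtain ⟨n₁, T₁, hT₁, rfl⟩ := hX
  obtain ⟨n₂, T₂, hT₂, rfl⟩ := hY
  refine ⟨n₁ + n₂, Fin.append T₁ T₂,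
    fun i => Fin.addCases (by simpa using hT₁) (by simpa using hT₂) i, ?_⟩
  simp [Fin.sum_univ_add]

end SN

/-- If `n, m ≤ d` and `n + m ≥ d + 3`, then `E_{n,m} ∈ S_{d-1}`. -/
theorem matUnit_mem_SN_of_add_ge (d n m : ℕ) (hn : n ≤ d) (hm : m ≤ d)
    (hnm : d + 3 ≤ n + m) : matUnit d n m ∈ SN d (d - 1) := by
  set J := upShift d
  have hJ : J ∈ Tod1 d := upShift_mem_Tod1 d
  have hE : matUnit d n m =
      J ^ (d - n) * Jᵀ ^ (d - m) + -J * (J ^ (d - n) * Jᵀ ^ (d - m + 1)) := by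
    have := upShift_pow_mul_transpose_pow_sub_succ d (d - n) (d - m)
    rw [show ((d : ℤ) - (d - n : ℕ)) = n by omega, show ((d : ℤ) - (d - m : ℕ)) = m by omega,
      transpose_pow, transpose_pow] at this
    rw [← this, pow_succ' J, neg_mul, ← sub_eq_add_neg, mul_assoc]
  have hLpow (b : ℕ) : Jᵀ ^ b ∈ SN d b := by
    simpa using pow_mul_mem_SN (transpose_mem_Tod1 hJ) one_mem_SN_zero b
  rw [hE]
  exact add_mem_SN (SN_mono (by omega) (pow_mul_mem_SN hJ (hLpow _) _))
    (SN_mono (by omega) (mul_mem_SN_succ (neg_mem_Tod1 hJ) (pow_mul_mem_SN hJ (hLpow _) _)))
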